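/- For q > 1 define S̃_q(x) = (1/(q−1))·[1 − ((1+√x)/2)^q − ((1−√x)/2)^q] for x ∈ [0,1]. Then: S̃_q is concave on [0,1] for 1 < q < 2 and for q > 3; S̃_q is convex on [0,1] for 2 < q < 3; and S̃_q is an affine (linear) function of x for q = 2 and q = 3. -/

import Mathlib

/-!
STATEMENT 6: For q > 1 define S̃_q(x) = (1/(q−1))·[1 − ((1+√x)/2)^q − ((1−√x)/2)^q] on
[0,1].  Then S̃_q is concave on [0,1] for 1 < q < 2 and for q > 3, convex on [0,1] for
2 < q < 3, and affine in x for q = 2 and q = 3.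
-/

noncomputable section

/-- The Tsallis entropy of a dichotomic observable, as a function of the squared
expectation value x; real exponentiation `^ q` is `Real.rpow`. -/
def tsallisFn (q : ℝ) (x : ℝ) : ℝ :=
  (1 / (q - 1)) * (1 - ((1 + Real.sqrt x) / 2) ^ q - ((1 - Real.sqrt x) / 2) ^ q)

open Real Set

noncomputable section Aux

variable {q : ℝ}

/-- difference of powers -/
def Nf (p u : ℝ) : ℝ := ((1+u)/2) ^ p - ((1-u)/2) ^ p
/-- sum of powers -/
def Mf (p u : ℝ) : ℝ := ((1+u)/2) ^ p + ((1-u)/2) ^ p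

def phi (q u : ℝ) : ℝ := (q-1)/2 * (u * Mf (q-2) u) - Nf (q-1) u

lemma hderiv_Apow (p : ℝ) {u : ℝ} (hu : -1 < u) :
    HasDerivAt (fun u => ((1+u)/2) ^ p) ((1/2) * p * ((1+u)/2) ^ (p-1)) u := by
  have h1 : HasDerivAt (fun u : ℝ => (1+u)/2) (1/2) u := by
    simpa using ((hasDerivAt_id u).const_add 1).div_const 2
  exact h1.rpow_const (Or.inl (by linarith : (0:ℝ) < (1+u)/2).ne')

lemma hderiv_Bpow (p : ℝ) {u : ℝ} (hu : u < 1) :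
    HasDerivAt (fun u => ((1-u)/2) ^ p) ((-1/2) * p * ((1-u)/2) ^ (p-1)) u := by
  have h1 : HasDerivAt (fun u : ℝ => (1-u)/2) (-1/2) u := by
    simpa using ((hasDerivAt_id u).const_sub 1).div_const 2
  have h2 : (0:ℝ) < (1-u)/2 := by linarith
  exact h1.rpow_const (Or.inl h2.ne')

lemma hderiv_N (p : ℝ) {u : ℝ} (hu : u ∈ Ioo (-1:ℝ) 1) :
    HasDerivAt (Nf p) (p/2 * Mf (p-1) u) u := by
  have := (hderiv_Apow p hu.1).sub (hderiv_Bpow p hu.2)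
  refine this.congr_deriv ?_
  unfold Mf; ring

lemma hderiv_M (p : ℝ) {u : ℝ} (hu : u ∈ Ioo (-1:ℝ) 1) :
    HasDerivAt (Mf p) (p/2 * Nf (p-1) u) u := by
  have := (hderiv_Apow p hu.1).add (hderiv_Bpow p hu.2)
  refine this.congr_deriv ?_
  unfold Nf; ring

lemma hderiv_phi {u : ℝ} (hu : u ∈ Ioo (-1:ℝ) 1) :
    HasDerivAt (phi q) ((q-1)*(q-2)/4 * (u * Nf (q-3) u)) u := by
  have hm : HasDerivAt (fun u => u * Mf (q-2) u) (1 * Mf (q-2) u + u * ((q-2)/2 * Nf (q-2-1) u)) u :=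
    (hasDerivAt_id u).mul (hderiv_M (q-2) hu)
  have e : (q-1)*(q-2)/4 * (u * Nf (q-3) u)
      = (q-1)/2 * (1 * Mf (q-2) u + u * ((q-2)/2 * Nf (q-2-1) u))
        - (q-1)/2 * Mf (q-1-1) u := by
    rw [show q-2-1 = q-3 by ring, show q-1-1 = q-2 by ring]; ring
  rw [e]
  exact (hm.const_mul ((q-1)/2)).sub (hderiv_N (q-1) hu)

lemma Nf_sign_pos {u : ℝ} (hu : u ∈ Ioo (0:ℝ) 1) {p : ℝ} (hp : 0 < p) : 0 < Nf p u := by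
  have h1 : (0:ℝ) ≤ (1-u)/2 := by linarith [hu.2]
  have h2 : (1-u)/2 < (1+u)/2 := by linarith [hu.1]
  exact sub_pos.2 (Real.rpow_lt_rpow h1 h2 hp)

lemma Nf_sign_neg {u : ℝ} (hu : u ∈ Ioo (0:ℝ) 1) {p : ℝ} (hp : p < 0) : Nf p u < 0 := by
  have h1 : (0:ℝ) < (1-u)/2 := by linarith [hu.2]
  have h2 : (1-u)/2 < (1+u)/2 := by linarith [hu.1]
  exact sub_neg.2 (Real.rpow_lt_rpow_of_neg h1 h2 hp)

lemma phi_zero : phi q 0 = 0 := by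
  unfold phi Nf
  norm_num

lemma phi_cont {u : ℝ} (hu : u < 1) : ContinuousOn (phi q) (Icc 0 u) := by
  intro v hv
  have hv' : v ∈ Ioo (-1:ℝ) 1 := ⟨by linarith [hv.1], lt_of_le_of_lt hv.2 hu⟩
  exact (hderiv_phi hv').differentiableAt.continuousAt.continuousWithinAt

lemma phi_pos (hq : 1 < q) (hsgn : 0 < (q-2)*(q-3)) {u : ℝ} (hu : u ∈ Ioo (0:ℝ) 1) :
    0 < phi q u := by
  have key : StrictMonoOn (phi q) (Icc 0 u) := by
    apply strictMonoOn_of_deriv_pos (convex_Icc 0 u) (phi_cont hu.2)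
    intro v hv
    rw [interior_Icc] at hv
    have hv' : v ∈ Ioo (-1:ℝ) 1 := ⟨by linarith [hv.1], lt_trans hv.2 hu.2⟩
    have hv'' : v ∈ Ioo (0:ℝ) 1 := ⟨hv.1, lt_trans hv.2 hu.2⟩
    rw [(hderiv_phi hv').deriv]
    rcases mul_pos_iff.1 hsgn with ⟨h2, h3⟩ | ⟨h2, h3⟩
    · have hN : 0 < Nf (q-3) v := Nf_sign_pos hv'' (by linarith)
      have h4 : 0 < (q-1)*(q-2)/4 := by nlinarith
      exact mul_pos h4 (mul_pos hv.1 hN)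
    · have hN : Nf (q-3) v < 0 := Nf_sign_neg hv'' (by linarith)
      have h4 : (q-1)*(q-2)/4 < 0 := by nlinarith
      exact mul_pos_of_neg_of_neg h4 (by nlinarith [hv.1])
  have := key (left_mem_Icc.2 hu.1.le) (right_mem_Icc.2 hu.1.le) hu.1
  rwa [phi_zero] at this

lemma phi_neg (hq : 1 < q) (hsgn : (q-2)*(q-3) < 0) {u : ℝ} (hu : u ∈ Ioo (0:ℝ) 1) :
    phi q u < 0 := by
  have key : StrictAntiOn (phi q) (Icc 0 u) := by
    apply strictAntiOn_of_deriv_neg (convex_Icc 0 u) (phi_cont hu.2)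
    intro v hv
    rw [interior_Icc] at hv
    have hv' : v ∈ Ioo (-1:ℝ) 1 := ⟨by linarith [hv.1], lt_trans hv.2 hu.2⟩
    have hv'' : v ∈ Ioo (0:ℝ) 1 := ⟨hv.1, lt_trans hv.2 hu.2⟩
    rw [(hderiv_phi hv').deriv]
    rcases mul_neg_iff.1 hsgn with ⟨h2, h3⟩ | ⟨h2, h3⟩
    · have hN : Nf (q-3) v < 0 := Nf_sign_neg hv'' (by linarith)
      have h4 : 0 < (q-1)*(q-2)/4 := by nlinarith
      exact mul_neg_of_pos_of_neg h4 (by nlinarith [hv.1])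
    · have hN : 0 < Nf (q-3) v := Nf_sign_pos hv'' (by linarith)
      have h4 : (q-1)*(q-2)/4 < 0 := by nlinarith
      exact mul_neg_of_neg_of_pos h4 (by nlinarith [hv.1])
  have := key (left_mem_Icc.2 hu.1.le) (right_mem_Icc.2 hu.1.le) hu.1
  rwa [phi_zero] at this

/-- the slope function h(u) = N_{q-1}(u)/u -/
def hfun (q u : ℝ) : ℝ := Nf (q-1) u / u

lemma hderiv_hfun {u : ℝ} (hu : u ∈ Ioo (0:ℝ) 1) :
    HasDerivAt (hfun q) (phi q u / u ^ 2) u := by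
  have hu' : u ∈ Ioo (-1:ℝ) 1 := ⟨by linarith [hu.1], hu.2⟩
  have := (hderiv_N (q-1) hu').div (hasDerivAt_id u) hu.1.ne'
  refine this.congr_deriv ?_
  unfold phi
  have : q - 1 - 1 = q - 2 := by ring
  rw [this]
  congr 1
  simp only [id_eq]
  ring

end Aux

noncomputable section Aux2

variable {q : ℝ}

lemma hfun_cont : ContinuousOn (hfun q) (Ioo 0 1) := fun u hu =>
  (hderiv_hfun hu).differentiableAt.continuousAt.continuousWithinAt

lemma hfun_strictMono (hq : 1 < q) (hsgn : 0 < (q-2)*(q-3)) :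
    StrictMonoOn (hfun q) (Ioo 0 1) := by
  apply strictMonoOn_of_deriv_pos (convex_Ioo 0 1) hfun_cont
  intro u hu
  rw [isOpen_Ioo.interior_eq] at hu
  rw [(hderiv_hfun hu).deriv]
  exact div_pos (phi_pos hq hsgn hu) (pow_pos hu.1 2)

lemma hfun_strictAnti (hq : 1 < q) (hsgn : (q-2)*(q-3) < 0) :
    StrictAntiOn (hfun q) (Ioo 0 1) := by
  apply strictAntiOn_of_deriv_neg (convex_Ioo 0 1) hfun_cont
  intro u hu
  rw [isOpen_Ioo.interior_eq] at hu
  rw [(hderiv_hfun hu).deriv]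
  exact div_neg_of_neg_of_pos (phi_neg hq hsgn hu) (pow_pos hu.1 2)

lemma sqrt_mem {x : ℝ} (hx : x ∈ Ioo (0:ℝ) 1) : Real.sqrt x ∈ Ioo (0:ℝ) 1 :=
  ⟨Real.sqrt_pos.2 hx.1, by
    rw [show (1:ℝ) = Real.sqrt 1 by simp]
    exact Real.sqrt_lt_sqrt hx.1.le hx.2⟩

lemma hderiv_f (hq : 1 < q) {x : ℝ} (hx : x ∈ Ioo (0:ℝ) 1) :
    HasDerivAt (tsallisFn q) (-(q / (q-1) / 4) * hfun q (Real.sqrt x)) x := by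
  have hs := Real.hasDerivAt_sqrt hx.1.ne'
  have hsx := sqrt_mem hx
  have hsnn : (0:ℝ) ≤ Real.sqrt x := Real.sqrt_nonneg x
  have hA : HasDerivAt (fun x => (1 + Real.sqrt x)/2) (1/(2*Real.sqrt x)/2) x :=
    (hs.const_add 1).div_const 2
  have hB : HasDerivAt (fun x => (1 - Real.sqrt x)/2) (-(1/(2*Real.sqrt x))/2) x :=
    (hs.const_sub 1).div_const 2
  have hAq := hA.rpow_const (p := q) (Or.inl (by positivity : (0:ℝ) < (1+Real.sqrt x)/2).ne')
  have hBq := hB.rpow_const (p := q)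
    (Or.inl (by linarith [hsx.2] : (0:ℝ) < (1-Real.sqrt x)/2).ne')
  have htot := ((hAq.const_sub 1).sub hBq).const_mul (1/(q-1))
  have e : -(q / (q-1) / 4) * hfun q (Real.sqrt x)
      = 1/(q-1) * (-(1/(2*Real.sqrt x)/2 * q * ((1+Real.sqrt x)/2) ^ (q-1))
        - -(1/(2*Real.sqrt x))/2 * q * ((1-Real.sqrt x)/2) ^ (q-1)) := by
    unfold hfun Nf
    simp only [one_div, div_eq_mul_inv, mul_inv]
    ring
  rw [show tsallisFn q = fun x =>
      1/(q-1) * (1 - ((1+Real.sqrt x)/2) ^ q - ((1-Real.sqrt x)/2) ^ q) from rfl, e]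
  exact htot

lemma f_cont (hq : 1 < q) : Continuous (tsallisFn q) := by
  have h0 : (0:ℝ) ≤ q := by linarith
  have cA : Continuous (fun x : ℝ => ((1 + Real.sqrt x)/2) ^ q) :=
    ((continuous_const.add Real.continuous_sqrt).div_const 2).rpow_const (fun x => Or.inr h0)
  have cB : Continuous (fun x : ℝ => ((1 - Real.sqrt x)/2) ^ q) :=
    ((continuous_const.sub Real.continuous_sqrt).div_const 2).rpow_const (fun x => Or.inr h0)
  exact continuous_const.mul ((continuous_const.sub cA).sub cB)

lemma concave_ts (hq : 1 < q) (hsgn : 0 < (q-2)*(q-3)) :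
    ConcaveOn ℝ (Icc 0 1) (tsallisFn q) := by
  apply AntitoneOn.concaveOn_of_deriv (convex_Icc 0 1) (f_cont hq).continuousOn
  · rw [interior_Icc]
    exact fun x hx => (hderiv_f hq hx).differentiableAt.differentiableWithinAt
  · rw [interior_Icc]
    intro x hx y hy hxy
    rw [(hderiv_f hq hx).deriv, (hderiv_f hq hy).deriv]
    have hmono := ((hfun_strictMono hq hsgn).monotoneOn) (sqrt_mem hx) (sqrt_mem hy)
      (Real.sqrt_le_sqrt hxy)
    have hc : 0 < q/(q-1)/4 := div_pos (div_pos (by linarith) (by linarith)) (by norm_num)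
    nlinarith [mul_le_mul_of_nonneg_left hmono hc.le]

lemma convex_ts (hq : 1 < q) (hsgn : (q-2)*(q-3) < 0) :
    ConvexOn ℝ (Icc 0 1) (tsallisFn q) := by
  apply MonotoneOn.convexOn_of_deriv (convex_Icc 0 1) (f_cont hq).continuousOn
  · rw [interior_Icc]
    exact fun x hx => (hderiv_f hq hx).differentiableAt.differentiableWithinAt
  · rw [interior_Icc]
    intro x hx y hy hxy
    rw [(hderiv_f hq hx).deriv, (hderiv_f hq hy).deriv]
    have hanti := ((hfun_strictAnti hq hsgn).antitoneOn) (sqrt_mem hx) (sqrt_mem hy)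
      (Real.sqrt_le_sqrt hxy)
    have hc : 0 < q/(q-1)/4 := div_pos (div_pos (by linarith) (by linarith)) (by norm_num)
    nlinarith [mul_le_mul_of_nonneg_left hanti hc.le]

end Aux2

theorem stmt6 (q : ℝ) (hq : 1 < q) :
    ((q < 2) → ConcaveOn ℝ (Set.Icc 0 1) (tsallisFn q)) ∧
    ((3 < q) → ConcaveOn ℝ (Set.Icc 0 1) (tsallisFn q)) ∧
    ((2 < q ∧ q < 3) → ConvexOn ℝ (Set.Icc 0 1) (tsallisFn q)) ∧
    ((q = 2 ∨ q = 3) → ∃ α β : ℝ, ∀ x ∈ Set.Icc (0 : ℝ) 1,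
        tsallisFn q x = α * x + β) := by
  refine ⟨fun h2 => concave_ts hq (by nlinarith), fun h3 => concave_ts hq (by nlinarith),
    fun ⟨h2, h3⟩ => convex_ts hq (by nlinarith), ?_⟩
  rintro (rfl | rfl)
  · refine ⟨-(1/2), 1/2, fun x hx => ?_⟩
    have hsq : Real.sqrt x ^ 2 = x := Real.sq_sqrt hx.1
    unfold tsallisFn
    rw [show ((1 + Real.sqrt x) / 2) ^ (2:ℝ) = ((1 + Real.sqrt x) / 2) ^ (2:ℕ) from by
        rw [← Real.rpow_natCast]; norm_num,
      show ((1 - Real.sqrt x) / 2) ^ (2:ℝ) = ((1 - Real.sqrt x) / 2) ^ (2:ℕ) from by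
        rw [← Real.rpow_natCast]; norm_num]
    linear_combination (-(1/2)) * hsq
  · refine ⟨-(3/8), 3/8, fun x hx => ?_⟩
    have hsq : Real.sqrt x ^ 2 = x := Real.sq_sqrt hx.1
    unfold tsallisFn
    rw [show ((1 + Real.sqrt x) / 2) ^ (3:ℝ) = ((1 + Real.sqrt x) / 2) ^ (3:ℕ) from by
        rw [← Real.rpow_natCast]; norm_num,
      show ((1 - Real.sqrt x) / 2) ^ (3:ℝ) = ((1 - Real.sqrt x) / 2) ^ (3:ℕ) from by
        rw [← Real.rpow_natCast]; norm_num]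
    linear_combination (-(3/8)) * hsq
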